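/- For every x ∈ (−1,0) ∪ (0,1), arctan((1−x²)/(2x)) ≤ (π/2)·(1−x). -/

import Mathlib

/-!
For `x ∈ (0,1)` put `θ = arctan x`; then `(1 - x²)/(2x) = cot 2θ`, so the left side is `π/2 - 2θ`,
and the claim becomes `arctan x ≥ (π/4) x`, i.e. the graph of the concave function `arctan` on
`[0,1]` lies above its chord. For `x ∈ (-1,0)` the left side is below `π/2` while the right side
exceeds `π/2`.
-/

open Real Set

theorem strictConcaveOn_arctan : StrictConcaveOn ℝ (Ici 0) arctan := by
  refine StrictAntiOn.strictConcaveOn_of_deriv (convex_Ici 0) continuous_arctan.continuousOn ?_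
  rw [interior_Ici, Real.deriv_arctan]
  intro a (ha : 0 < a) b _ hab
  have hsq : a ^ 2 < b ^ 2 := by nlinarith
  exact one_div_lt_one_div_of_lt (by positivity) (by linarith)

theorem pi_div_four_mul_le_arctan {x : ℝ} (h0 : 0 ≤ x) (h1 : x ≤ 1) :
    π / 4 * x ≤ arctan x := by
  have chord := strictConcaveOn_arctan.concaveOn.2 (mem_Ici.2 le_rfl) (mem_Ici.2 zero_le_one)
    (sub_nonneg.2 h1) h0 (sub_add_cancel 1 x)
  simp only [smul_eq_mul, mul_zero, mul_one, zero_add, arctan_zero, arctan_one] at chord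
  linarith

theorem arctan_one_sub_sq_div_two_mul {x : ℝ} (hx : 0 < x) :
    arctan ((1 - x ^ 2) / (2 * x)) = π / 2 - 2 * arctan x := by
  have hpos : 0 < arctan x := arctan_zero ▸ arctan_strictMono hx
  have hlt : arctan x < π / 2 := arctan_lt_pi_div_two x
  have htan : tan (π / 2 - 2 * arctan x) = (1 - x ^ 2) / (2 * x) := by
    rw [tan_pi_div_two_sub, tan_two_mul, tan_arctan, inv_div]
  rw [← htan, arctan_tan] <;> linarith

/-- For every `x ∈ (−1,0) ∪ (0,1)`, `arctan((1−x²)/(2x)) ≤ (π/2)(1−x)`. -/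
theorem arctan_le_pi_div_two_mul (x : ℝ)
    (hx : x ∈ Set.Ioo (-1 : ℝ) 0 ∪ Set.Ioo (0 : ℝ) 1) :
    Real.arctan ((1 - x ^ 2) / (2 * x)) ≤ Real.pi / 2 * (1 - x) := by
  rcases hx with ⟨-, hneg⟩ | ⟨hpos, hlt⟩
  · calc arctan ((1 - x ^ 2) / (2 * x)) ≤ π / 2 := (arctan_lt_pi_div_two _).le
      _ ≤ π / 2 * (1 - x) := le_mul_of_one_le_right (by positivity) (by linarith)
  · rw [arctan_one_sub_sq_div_two_mul hpos]
    linarith [pi_div_four_mul_le_arctan hpos.le hlt.le]
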